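/- arXiv:math/9902025 — 7 statements merged into one kernel-verified Lean document; each statement's English description precedes it below -/
import Mathlib

section
/- For any class-KL function β and any class-K function σ, there exist a class-KL function β̂ and a class-K function γ̂ such that min{σ(s), β(r,t)} ≤ β̂(s, t/(1+γ̂(r))) for all s, r, t ≥ 0. -/
open Set Filter

/-- A function of class `K`: continuous and strictly increasing on `[0,∞)` with `γ 0 = 0`. -/
def ClassK (γ : ℝ → ℝ) : Prop :=
  ContinuousOn γ (Ici 0) ∧ StrictMonoOn γ (Ici 0) ∧ γ 0 = 0

/-- A function of class `K∞`: class `K` and unbounded. -/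
def ClassKInfty (γ : ℝ → ℝ) : Prop :=
  ClassK γ ∧ Tendsto γ atTop atTop

/-- A function of class `KL`: class `K` in the first argument for each fixed `t ≥ 0`;
continuous, decreasing and converging to `0` in the second argument for each fixed `r ≥ 0`. -/
def ClassKL (β : ℝ → ℝ → ℝ) : Prop :=
  (∀ t ∈ Ici (0:ℝ), ClassK (fun r => β r t)) ∧
  (∀ r ∈ Ici (0:ℝ), ContinuousOn (β r) (Ici 0) ∧ AntitoneOn (β r) (Ici 0) ∧
    Tendsto (β r) atTop (nhds 0))

noncomputable section StmtAux

variable (β : ℝ → ℝ → ℝ)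

namespace StmtAux

lemma beta_nonneg (hβ : ClassKL β) {r t : ℝ} (hr : 0 ≤ r) (ht : 0 ≤ t) : 0 ≤ β r t := by
  have h0 : β 0 t = 0 := (hβ.1 t ht).2.2
  have := ((hβ.1 t ht).2.1.monotoneOn) (le_refl (0:ℝ)) hr hr
  simpa [h0] using this

lemma beta_mono_left (hβ : ClassKL β) {r r' t : ℝ} (ht : 0 ≤ t) (hr : 0 ≤ r) (hrr : r ≤ r') :
    β r t ≤ β r' t :=
  ((hβ.1 t ht).2.1.monotoneOn) hr (hr.trans hrr) hrr

lemma beta_anti (hβ : ClassKL β) {r t t' : ℝ} (hr : 0 ≤ r) (ht : 0 ≤ t) (htt : t ≤ t') :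
    β r t' ≤ β r t :=
  (hβ.2 r hr).2.1 ht (ht.trans htt) htt

/-- The set of times after which `β r ·` is below `exp (-r)`. -/
def Tset (r : ℝ) : Set ℝ :=
  {t : ℝ | 0 ≤ t ∧ β (max r 0) t ≤ Real.exp (-(max r 0))}

/-- A "settling time" function, monotone in `r`. -/
def Tfun (r : ℝ) : ℝ := sInf (Tset β r)

lemma Tset_nonempty (hβ : ClassKL β) (r : ℝ) : (Tset β r).Nonempty := by
  have h := (hβ.2 (max r 0) (le_max_right r 0)).2.2
  have h2 : ∀ᶠ t in atTop, β (max r 0) t ≤ Real.exp (-(max r 0)) :=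
    h.eventually_le_const (Real.exp_pos _)
  obtain ⟨t, ht1, ht2⟩ := (h2.and (eventually_ge_atTop (0:ℝ))).exists
  exact ⟨t, ht2, ht1⟩

lemma Tset_bddBelow (r : ℝ) : BddBelow (Tset β r) := ⟨0, fun t ht => ht.1⟩

lemma Tfun_nonneg (hβ : ClassKL β) (r : ℝ) : 0 ≤ Tfun β r :=
  le_csInf (Tset_nonempty β hβ r) (fun t ht => ht.1)

lemma Tfun_mono (hβ : ClassKL β) : Monotone (Tfun β) := by
  intro a b hab
  refine csInf_le_csInf (Tset_bddBelow β a) (Tset_nonempty β hβ b) ?_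
  intro t ht
  refine ⟨ht.1, ?_⟩
  have h1 : β (max a 0) t ≤ β (max b 0) t :=
    beta_mono_left β hβ ht.1 (le_max_right a 0) (max_le_max hab (le_refl 0))
  have h2 : Real.exp (-(max b 0)) ≤ Real.exp (-(max a 0)) :=
    Real.exp_le_exp.mpr (by simp only [neg_le_neg_iff]; exact max_le_max hab (le_refl 0))
  exact h1.trans (ht.2.trans h2)

lemma Tfun_spec (hβ : ClassKL β) {r t : ℝ} (hr : 0 ≤ r) (ht : 0 ≤ t)
    (h : Tfun β r < t) : β r t ≤ Real.exp (-r) := by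
  obtain ⟨t', ht'mem, ht'lt⟩ := exists_lt_of_csInf_lt (Tset_nonempty β hβ r) h
  have hmax : max r 0 = r := max_eq_left hr
  simp only [Tset, mem_setOf_eq, hmax] at ht'mem
  have : β r t ≤ β r t' := beta_anti β hβ hr ht'mem.1 ht'lt.le
  exact this.trans ht'mem.2

/-- Averaged settling time: continuous, monotone, dominating `Tfun`. -/
def Ffun (r : ℝ) : ℝ := ∫ x in r..(r+1), Tfun β x

lemma Tfun_intervalIntegrable (hβ : ClassKL β) (a b : ℝ) :
    IntervalIntegrable (Tfun β) MeasureTheory.volume a b :=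
  (Tfun_mono β hβ).intervalIntegrable

lemma Ffun_cont (hβ : ClassKL β) : Continuous (Ffun β) := by
  have hprim := intervalIntegral.continuous_primitive (Tfun_intervalIntegrable β hβ) 0
  have heq : Ffun β = fun r =>
      (∫ x in (0:ℝ)..(r+1), Tfun β x) - ∫ x in (0:ℝ)..r, Tfun β x := by
    funext r
    exact (intervalIntegral.integral_interval_sub_left (Tfun_intervalIntegrable β hβ 0 (r+1))
      (Tfun_intervalIntegrable β hβ 0 r)).symm
  rw [heq]
  exact (hprim.comp (continuous_id.add continuous_const)).sub hprim

lemma Ffun_eq (r : ℝ) : Ffun β r = ∫ x in (0:ℝ)..1, Tfun β (x + r) := by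
  rw [intervalIntegral.integral_comp_add_right (Tfun β) r]
  norm_num [Ffun, add_comm]

lemma Ffun_mono (hβ : ClassKL β) : Monotone (Ffun β) := by
  intro a b hab
  rw [Ffun_eq, Ffun_eq]
  have hint : ∀ c : ℝ, IntervalIntegrable (fun x => Tfun β (x + c))
      MeasureTheory.volume 0 1 := by
    intro c
    exact (Monotone.intervalIntegrable (fun x y hxy =>
      Tfun_mono β hβ (by linarith : x + c ≤ y + c)))
  refine intervalIntegral.integral_mono_on zero_le_one (hint a) (hint b) ?_
  intro x _
  exact Tfun_mono β hβ (by linarith)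

lemma Ffun_nonneg (hβ : ClassKL β) (r : ℝ) : 0 ≤ Ffun β r := by
  refine intervalIntegral.integral_nonneg (by linarith) ?_
  intro u _
  exact Tfun_nonneg β hβ u

lemma Ffun_ge (hβ : ClassKL β) (r : ℝ) : Tfun β r ≤ Ffun β r := by
  have h : (∫ _x in r..(r+1), Tfun β r) ≤ ∫ x in r..(r+1), Tfun β x := by
    refine intervalIntegral.integral_mono_on (by linarith)
      (intervalIntegrable_const) (Tfun_intervalIntegrable β hβ r (r+1)) ?_
    intro x hx
    exact Tfun_mono β hβ hx.1
  simpa [Ffun] using h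

/-- The class-`K` time-scaling function. -/
def gam (r : ℝ) : ℝ := r + r * (1 + Ffun β r)

lemma gam_classK (hβ : ClassKL β) : ClassK (gam β) := by
  refine ⟨?_, ?_, by simp [gam]⟩
  · refine Continuous.continuousOn ?_
    have h := Ffun_cont β hβ
    unfold gam
    fun_prop
  · intro a ha b hb hab
    have hFa := Ffun_nonneg β hβ a
    have hFm := Ffun_mono β hβ hab.le
    have : a * (1 + Ffun β a) ≤ b * (1 + Ffun β b) :=
      mul_le_mul hab.le (by linarith) (by linarith) (le_trans ha hab.le)
    simp only [gam]
    linarith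

lemma gam_nonneg (hβ : ClassKL β) {r : ℝ} (hr : 0 ≤ r) : 0 ≤ gam β r := by
  have hFa := Ffun_nonneg β hβ r
  have : 0 ≤ r * (1 + Ffun β r) := mul_nonneg hr (by linarith)
  simp only [gam]; linarith

lemma gam_big (hβ : ClassKL β) {r : ℝ} (hr : 1 ≤ r) : Tfun β r + 2 ≤ gam β r := by
  have h1 := Ffun_ge β hβ r
  have h2 := Ffun_nonneg β hβ r
  have h3 : 1 * (1 + Ffun β r) ≤ r * (1 + Ffun β r) :=
    mul_le_mul_of_nonneg_right hr (by linarith)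
  simp only [gam]; linarith

/-- The diagonal sequence of levels. -/
def Qset (n : ℕ) : Set ℝ := {1} ∪ {c : ℝ | 1 ≤ c ∧ c ≤ n ∧ Tfun β c ≤ (n:ℝ) - 1}

def Qseq (n : ℕ) : ℝ := sSup (Qset β n)

lemma Qset_bddAbove (n : ℕ) : BddAbove (Qset β n) := by
  refine ⟨max 1 n, ?_⟩
  rintro x (hx | hx)
  · simp only [mem_singleton_iff] at hx; subst hx; exact le_max_left _ _
  · exact hx.2.1.trans (le_max_right _ _)

lemma Qset_nonempty (n : ℕ) : (Qset β n).Nonempty := ⟨1, Or.inl rfl⟩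

lemma Qseq_ge_one (n : ℕ) : 1 ≤ Qseq β n :=
  le_csSup (Qset_bddAbove β n) (Or.inl rfl)

lemma Qseq_mono : Monotone (Qseq β) := by
  intro a b hab
  refine csSup_le_csSup (Qset_bddAbove β b) (Qset_nonempty β a) ?_
  rintro x (hx | hx)
  · exact Or.inl hx
  · refine Or.inr ⟨hx.1, hx.2.1.trans (by exact_mod_cast hab), hx.2.2.trans (by
      have : (a:ℝ) ≤ b := by exact_mod_cast hab
      linarith)⟩

lemma Qseq_tendsto (hβ : ClassKL β) : Tendsto (Qseq β) atTop atTop := by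
  rw [tendsto_atTop]
  intro b
  set M : ℝ := max b 1 with hM
  have hM1 : 1 ≤ M := le_max_right b 1
  have hT0 : 0 ≤ Tfun β M := Tfun_nonneg β hβ M
  filter_upwards [eventually_ge_atTop (⌈M + Tfun β M + 1⌉₊)] with n hn
  have hcast : M + Tfun β M + 1 ≤ (n:ℝ) :=
    le_trans (Nat.le_ceil _) (by exact_mod_cast hn)
  have hmem : M ∈ Qset β n := by
    refine Or.inr ⟨hM1, by linarith, by linarith⟩
  exact le_trans (le_max_left b 1) (le_csSup (Qset_bddAbove β n) hmem)

def Pseq (n : ℕ) : ℝ := max 1 (Qseq β n - 1)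

lemma Pseq_ge_one (n : ℕ) : 1 ≤ Pseq β n := le_max_left _ _

lemma Pseq_mono : Monotone (Pseq β) := fun a b hab =>
  max_le_max (le_refl 1) (by linarith [Qseq_mono β hab])

lemma Pseq_tendsto (hβ : ClassKL β) : Tendsto (Pseq β) atTop atTop := by
  refine tendsto_atTop_mono (fun n => le_max_right 1 (Qseq β n - 1)) ?_
  have := tendsto_atTop_add_const_right atTop (-1) (Qseq_tendsto β hβ)
  simpa [sub_eq_add_neg] using this

/-- The decaying bound sequence. -/
def Aseq (n : ℕ) : ℝ := (β 1 1 + 1) * Real.exp (1 - Pseq β n)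

lemma Aseq_nonneg (hβ : ClassKL β) (n : ℕ) : 0 ≤ Aseq β n :=
  mul_nonneg (by linarith [beta_nonneg β hβ zero_le_one zero_le_one]) (Real.exp_pos _).le

lemma Aseq_anti (hβ : ClassKL β) : Antitone (Aseq β) := by
  intro a b hab
  have hC : 0 ≤ β 1 1 + 1 := by linarith [beta_nonneg β hβ (zero_le_one) (zero_le_one)]
  exact mul_le_mul_of_nonneg_left (Real.exp_le_exp.mpr (by linarith [Pseq_mono β hab])) hC

lemma Aseq_tendsto (hβ : ClassKL β) : Tendsto (Aseq β) atTop (nhds 0) := by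
  have h2 : Tendsto (fun n => 1 - Pseq β n) atTop atBot := by
    rw [tendsto_atBot]
    intro b
    filter_upwards [(Pseq_tendsto β hβ).eventually_ge_atTop (1 - b)] with n hn
    linarith
  have h3 : Tendsto (fun n => Real.exp (1 - Pseq β n)) atTop (nhds 0) :=
    Real.tendsto_exp_atBot.comp h2
  have := h3.const_mul (β 1 1 + 1)
  rw [mul_zero] at this
  exact this

/-- The key estimate: for `τ ≥ n ≥ 1` and `r ≥ 0`, `β r (τ * (1 + gam r)) ≤ Aseq n`. -/
lemma key (hβ : ClassKL β) (n : ℕ) (hn : 1 ≤ n) {τ : ℝ} (hτ : (n:ℝ) ≤ τ) {r : ℝ}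
    (hr : 0 ≤ r) : β r (τ * (1 + gam β r)) ≤ Aseq β n := by
  have hn1 : (1:ℝ) ≤ (n:ℝ) := by exact_mod_cast hn
  have h1τ : (1:ℝ) ≤ τ := hn1.trans hτ
  have hg0 : 0 ≤ gam β r := gam_nonneg β hβ hr
  set t := τ * (1 + gam β r) with htdef
  have htτ : τ ≤ t := le_mul_of_one_le_right (by linarith) (by linarith)
  have ht0 : 0 ≤ t := by linarith
  have hC : 0 ≤ β 1 1 := beta_nonneg β hβ zero_le_one zero_le_one
  have hexp : ∀ x : ℝ, Real.exp (-x) ≤ Real.exp (1 - x) := fun x =>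
    Real.exp_le_exp.mpr (by linarith)
  rcases le_or_gt (Pseq β n) r with hcase | hcase
  · -- r large: use the settling time
    have hr1 : 1 ≤ r := (Pseq_ge_one β n).trans hcase
    have hTr : Tfun β r < t := by
      have h1 : 1 * (1 + gam β r) ≤ t := mul_le_mul_of_nonneg_right h1τ (by linarith)
      have h2 := gam_big β hβ hr1
      linarith
    have h3 : β r t ≤ Real.exp (-r) := Tfun_spec β hβ hr ht0 hTr
    have h4 : Real.exp (-r) ≤ Real.exp (1 - Pseq β n) :=
      Real.exp_le_exp.mpr (by linarith)
    calc β r t ≤ Real.exp (1 - Pseq β n) := h3.trans h4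
      _ ≤ Aseq β n := le_mul_of_one_le_left (Real.exp_pos _).le (by linarith)
  · -- r small
    have hβrn : β r t ≤ β r (n:ℝ) := beta_anti β hβ hr (by linarith) (hτ.trans htτ)
    rcases le_or_gt (Qseq β n) 2 with hQ | hQ
    · -- Pseq n = 1, r < 1
      have hP : Pseq β n = 1 := max_eq_left (by linarith)
      rw [hP] at hcase
      have h2 : β r (n:ℝ) ≤ β 1 (n:ℝ) := beta_mono_left β hβ (by linarith) hr hcase.le
      have h3 : β 1 (n:ℝ) ≤ β 1 1 := beta_anti β hβ zero_le_one zero_le_one hn1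
      have : Aseq β n = β 1 1 + 1 := by
        simp [Aseq, hP]
      rw [this]
      linarith
    · -- Qseq n > 2
      have hP : Pseq β n = Qseq β n - 1 := max_eq_right (by linarith)
      obtain ⟨ρ, hρmem, hρgt⟩ := exists_lt_of_lt_csSup (Qset_nonempty β n)
        (show Qseq β n - 1 < Qseq β n by linarith)
      rcases hρmem with hρ1 | ⟨hρge1, hρlen, hρT⟩
      · simp only [mem_singleton_iff] at hρ1; rw [hρ1] at hρgt; linarith
      · have hrρ : r ≤ ρ := by rw [hP] at hcase; linarith
        have h2 : β r (n:ℝ) ≤ β ρ (n:ℝ) := beta_mono_left β hβ (by linarith) hr hrρ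
        have h3 : β ρ (n:ℝ) ≤ Real.exp (-ρ) :=
          Tfun_spec β hβ (by linarith) (by linarith) (by linarith)
        have h4 : Real.exp (-ρ) ≤ Real.exp (1 - Pseq β n) := by
          rw [hP]; exact Real.exp_le_exp.mpr (by linarith)
        calc β r t ≤ Real.exp (1 - Pseq β n) := by linarith
          _ ≤ Aseq β n := le_mul_of_one_le_left (Real.exp_pos _).le (by linarith)

/-- Step function through the bound sequence. -/
def stepf (u : ℝ) : ℝ := Aseq β ⌈u⌉₊

lemma stepf_anti (hβ : ClassKL β) : Antitone (stepf β) := fun a b hab =>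
  Aseq_anti β hβ (Nat.ceil_mono hab)

lemma stepf_nonneg (hβ : ClassKL β) (u : ℝ) : 0 ≤ stepf β u := Aseq_nonneg β hβ _

/-- The continuous antitone envelope. -/
def ghat (τ : ℝ) : ℝ := ∫ u in (τ-2)..(τ-1), stepf β u

lemma ghat_cont (hβ : ClassKL β) : Continuous (ghat β) := by
  have hint : ∀ a b : ℝ, IntervalIntegrable (stepf β) MeasureTheory.volume a b :=
    fun a b => (stepf_anti β hβ).intervalIntegrable
  have hprim := intervalIntegral.continuous_primitive hint 0
  have heq : ghat β = fun τ =>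
      (∫ u in (0:ℝ)..(τ-1), stepf β u) - ∫ u in (0:ℝ)..(τ-2), stepf β u := by
    funext τ
    exact (intervalIntegral.integral_interval_sub_left (hint 0 (τ-1)) (hint 0 (τ-2))).symm
  rw [heq]
  exact (hprim.comp (continuous_id.sub continuous_const)).sub
    (hprim.comp (continuous_id.sub continuous_const))

lemma ghat_eq (τ : ℝ) : ghat β τ = ∫ x in (0:ℝ)..1, stepf β (x + (τ - 2)) := by
  rw [intervalIntegral.integral_comp_add_right (stepf β) (τ - 2)]
  norm_num [ghat]
  ring_nf

lemma ghat_anti (hβ : ClassKL β) : Antitone (ghat β) := by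
  intro a b hab
  rw [ghat_eq, ghat_eq]
  have hint : ∀ c : ℝ, IntervalIntegrable (fun x => stepf β (x + c))
      MeasureTheory.volume 0 1 :=
    fun c => Antitone.intervalIntegrable (fun x y hxy => stepf_anti β hβ (by linarith))
  refine intervalIntegral.integral_mono_on zero_le_one (hint _) (hint _) ?_
  intro x _
  exact stepf_anti β hβ (by linarith)

lemma ghat_nonneg (hβ : ClassKL β) (τ : ℝ) : 0 ≤ ghat β τ :=
  intervalIntegral.integral_nonneg (by linarith) (fun u _ => stepf_nonneg β hβ u)

lemma ghat_ge (hβ : ClassKL β) {τ : ℝ} (hτ : 1 ≤ τ) : Aseq β ⌊τ⌋₊ ≤ ghat β τ := by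
  have hint : IntervalIntegrable (stepf β) MeasureTheory.volume (τ-2) (τ-1) :=
    (stepf_anti β hβ).intervalIntegrable
  have h : (∫ _u in (τ-2)..(τ-1), Aseq β ⌊τ⌋₊) ≤ ∫ u in (τ-2)..(τ-1), stepf β u := by
    refine intervalIntegral.integral_mono_on (by linarith) intervalIntegrable_const hint ?_
    intro u hu
    have h1 : u ≤ (⌊τ⌋₊ : ℝ) := by
      have := Nat.lt_floor_add_one τ
      have hu2 := hu.2
      linarith
    have h2 : ⌈u⌉₊ ≤ ⌊τ⌋₊ := Nat.ceil_le.mpr h1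
    exact Aseq_anti β hβ h2
  rw [intervalIntegral.integral_const, show (τ-1) - (τ-2) = (1:ℝ) by ring, one_smul] at h
  exact h

lemma ghat_le (hβ : ClassKL β) (τ : ℝ) : ghat β τ ≤ Aseq β ⌈τ - 2⌉₊ := by
  have hint : IntervalIntegrable (stepf β) MeasureTheory.volume (τ-2) (τ-1) :=
    (stepf_anti β hβ).intervalIntegrable
  have h : (∫ u in (τ-2)..(τ-1), stepf β u) ≤ ∫ _u in (τ-2)..(τ-1), stepf β (τ - 2) := by
    refine intervalIntegral.integral_mono_on (by linarith) hint intervalIntegrable_const ?_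
    intro u hu
    exact stepf_anti β hβ hu.1
  rw [intervalIntegral.integral_const, show (τ-1) - (τ-2) = (1:ℝ) by ring, one_smul] at h
  simpa [stepf, ghat] using h

lemma ghat_tendsto (hβ : ClassKL β) : Tendsto (ghat β) atTop (nhds 0) := by
  have hceil : Tendsto (fun τ : ℝ => ⌈τ - 2⌉₊) atTop atTop := by
    rw [tendsto_atTop]
    intro b
    filter_upwards [eventually_ge_atTop ((b:ℝ) + 2)] with τ hτ
    have : (b:ℝ) ≤ τ - 2 := by linarith
    exact_mod_cast this.trans (Nat.le_ceil _)
  have hupper : Tendsto (fun τ : ℝ => Aseq β ⌈τ - 2⌉₊) atTop (nhds 0) :=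
    (Aseq_tendsto β hβ).comp hceil
  exact squeeze_zero (fun τ => ghat_nonneg β hβ τ) (fun τ => ghat_le β hβ τ) hupper

end StmtAux

end StmtAux

open StmtAux in
/-- For any class-`KL` function `β` and any class-`K` function `γ`, there exist a class-`KL`
function `β̂` and a class-`K` function `γ̂` such that
`min (γ s) (β r t) ≤ β̂ s (t / (1 + γ̂ r))` for all `s, r, t ≥ 0`. -/
theorem stmt2 (β : ℝ → ℝ → ℝ) (γ : ℝ → ℝ) (hβ : ClassKL β) (hγ : ClassK γ) :
    ∃ βhat : ℝ → ℝ → ℝ, ∃ γhat : ℝ → ℝ, ClassKL βhat ∧ ClassK γhat ∧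
      ∀ s r t : ℝ, 0 ≤ s → 0 ≤ r → 0 ≤ t →
        min (γ s) (β r t) ≤ βhat s (t / (1 + γhat r)) := by
  have hγnonneg : ∀ {s : ℝ}, 0 ≤ s → 0 ≤ γ s := by
    intro s hs
    have := hγ.2.1.monotoneOn (le_refl (0:ℝ)) hs hs
    simpa [hγ.2.2] using this
  refine ⟨fun s τ => min (γ s) (ghat β τ) + γ s * Real.exp (1 - τ), gam β, ?_, gam_classK β hβ, ?_⟩
  · constructor
    · -- class K in s for each fixed τ
      intro τ _
      refine ⟨?_, ?_, ?_⟩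
      · exact ((continuous_id.min continuous_const).comp_continuousOn hγ.1).add
          (hγ.1.mul continuousOn_const)
      · intro a ha b hb hab
        have h1 : min (γ a) (ghat β τ) ≤ min (γ b) (ghat β τ) :=
          min_le_min (hγ.2.1.monotoneOn ha hb hab.le) le_rfl
        have h2 : γ a * Real.exp (1 - τ) < γ b * Real.exp (1 - τ) :=
          mul_lt_mul_of_pos_right (hγ.2.1 ha hb hab) (Real.exp_pos _)
        dsimp only
        linarith
      · simp [hγ.2.2, min_eq_left (ghat_nonneg β hβ τ)]
    · -- properties in τ for each fixed s
      intro s hs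
      have hγs : 0 ≤ γ s := hγnonneg hs
      refine ⟨?_, ?_, ?_⟩
      · exact Continuous.continuousOn (by
          have := ghat_cont β hβ
          fun_prop)
      · intro a _ b _ hab
        have h1 : min (γ s) (ghat β b) ≤ min (γ s) (ghat β a) :=
          min_le_min le_rfl (ghat_anti β hβ hab)
        have h2 : γ s * Real.exp (1 - b) ≤ γ s * Real.exp (1 - a) :=
          mul_le_mul_of_nonneg_left (Real.exp_le_exp.mpr (by linarith)) hγs
        dsimp only
        linarith
      · have h1 : Tendsto (fun τ => min (γ s) (ghat β τ)) atTop (nhds 0) := by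
          refine squeeze_zero (fun τ => le_min hγs (ghat_nonneg β hβ τ))
            (fun τ => min_le_right _ _) (ghat_tendsto β hβ)
        have h2 : Tendsto (fun τ : ℝ => γ s * Real.exp (1 - τ)) atTop (nhds 0) := by
          have hb : Tendsto (fun τ : ℝ => 1 - τ) atTop atBot := by
            rw [tendsto_atBot]
            intro b
            filter_upwards [eventually_ge_atTop (1 - b)] with τ hτ
            linarith
          have := (Real.tendsto_exp_atBot.comp hb).const_mul (γ s)
          simpa using this
        have := h1.add h2
        simpa using this
  · -- the main inequality
    intro s r t hs hr ht
    have hγs : 0 ≤ γ s := hγnonneg hs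
    have hg0 : 0 ≤ gam β r := gam_nonneg β hβ hr
    have hpos : (0:ℝ) < 1 + gam β r := by linarith
    set τ := t / (1 + gam β r) with hτdef
    have hτ0 : 0 ≤ τ := div_nonneg ht hpos.le
    have hteq : t = τ * (1 + gam β r) := by
      rw [hτdef]; field_simp
    rcases le_or_gt τ 1 with hcase | hcase
    · have h1 : min (γ s) (β r t) ≤ γ s := min_le_left _ _
      have h2 : γ s ≤ γ s * Real.exp (1 - τ) :=
        le_mul_of_one_le_right hγs (Real.one_le_exp (by linarith))
      have h3 : 0 ≤ min (γ s) (ghat β τ) := le_min hγs (ghat_nonneg β hβ τ)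
      dsimp only
      linarith
    · have hfl1 : 1 ≤ ⌊τ⌋₊ := Nat.le_floor (by exact_mod_cast hcase.le)
      have hβle : β r t ≤ Aseq β ⌊τ⌋₊ := by
        rw [hteq]
        exact key β hβ ⌊τ⌋₊ hfl1 (Nat.floor_le hτ0) hr
      have h1 : min (γ s) (β r t) ≤ min (γ s) (ghat β τ) :=
        min_le_min le_rfl (hβle.trans (ghat_ge β hβ hcase.le))
      have h2 : 0 ≤ γ s * Real.exp (1 - τ) := mul_nonneg hγs (Real.exp_pos _).le
      dsimp only
      linarith
end

section
/- Let A ∈ ℝ^{n×n} be Hurwitz (all eigenvalues have negative real part), and suppose Π ∈ ℝ^{n×m} satisfies the Francis equations ΠS = AΠ + P and 0 = CΠ + Q for given matrices S, P, C, Q. Then for every solution (z(t), w(t)) of ż = Az + Pw, ẇ = Sw, the output y(t) = Cz(t) + Qw(t) tends to 0 as t → ∞. -/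
/-!
Set `e = z - Π w`. The first Francis equation makes `e` a solution of the unforced system
`ė = A e`, and the second one turns the output into `y = C e`, so it suffices that every solution
of `ė = A e` decays. After complexifying, split the initial value into generalized eigenvectors of
`A`. Through a generalized eigenvector `v` for `μ` runs the explicit solution
`e^{μt} ∑_{k ≤ K} t^k/k! (A - μ)^k v`, which decays because `Re μ < 0`; sums of decaying
solutions decay, and by uniqueness of solutions of linear ODEs every solution is such a sum.
-/

open Set Filter Matrix

def Hurwitz {n : ℕ} (A : Matrix (Fin n) (Fin n) ℝ) : Prop :=
  ∀ μ ∈ spectrum ℂ (A.map (algebraMap ℝ ℂ)), μ.re < 0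

open scoped Topology Nat

theorem hasDerivAt_pow_succ_div_factorial (k : ℕ) (t : ℝ) :
    HasDerivAt (fun s : ℝ => s ^ (k + 1) / (k + 1)!) (t ^ k / k !) t := by
  refine ((hasDerivAt_pow (k + 1) t).div_const _).congr_deriv ?_
  push_cast [Nat.factorial_succ, Nat.add_sub_cancel]
  field_simp

theorem tendsto_pow_mul_exp_mul_atTop_nhds_zero (k : ℕ) {b : ℝ} (hb : b < 0) :
    Tendsto (fun t : ℝ => t ^ k * Real.exp (b * t)) atTop (𝓝 0) := by
  refine ((isLittleO_pow_exp_pos_mul_atTop k (neg_pos.2 hb)).tendsto_div_nhds_zero).congr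
    fun t => ?_
  rw [div_eq_mul_inv, ← Real.exp_neg, neg_mul, neg_neg]

section LinearODE

variable {E : Type*} [NormedAddCommGroup E] [NormedSpace ℂ E]

noncomputable def truncExpOrbit (N : Module.End ℂ E) (K : ℕ) (v : E) (t : ℝ) : E :=
  ∑ k ∈ Finset.range (K + 1), (t ^ k / k ! : ℝ) • (N ^ k) v

theorem truncExpOrbit_zero (N : Module.End ℂ E) (K : ℕ) (v : E) :
    truncExpOrbit N K v 0 = v := by
  simp [truncExpOrbit, Finset.sum_range_succ']

theorem hasDerivAt_truncExpOrbit {N : Module.End ℂ E} {K : ℕ} {v : E}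
    (hv : (N ^ (K + 1)) v = 0) (t : ℝ) :
    HasDerivAt (truncExpOrbit N K v) (N (truncExpOrbit N K v t)) t := by
  have hsplit : truncExpOrbit N K v =
      fun s => v + ∑ k ∈ Finset.range K, (s ^ (k + 1) / (k + 1)! : ℝ) • (N ^ (k + 1)) v := by
    funext s
    simp [truncExpOrbit, Finset.sum_range_succ', add_comm]
  have hN : N (truncExpOrbit N K v t) =
      ∑ k ∈ Finset.range K, (t ^ k / k ! : ℝ) • (N ^ (k + 1)) v := by
    rw [pow_succ', Module.End.mul_apply] at hv
    simp only [truncExpOrbit, map_sum, LinearMap.map_smul_of_tower, pow_succ',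
      Module.End.mul_apply]
    rw [Finset.sum_range_succ, hv, smul_zero, add_zero]
  rw [hN, hsplit]
  exact (HasDerivAt.fun_sum fun k _ =>
    (hasDerivAt_pow_succ_div_factorial k t).smul_const _).const_add v

theorem HasDerivAt.cexp_mul_smul {T : Module.End ℂ E} {μ : ℂ} {p : ℝ → E} {t : ℝ}
    (hp : HasDerivAt p ((T - μ • 1) (p t)) t) :
    HasDerivAt (fun s : ℝ => Complex.exp (μ * s) • p s) (T (Complex.exp (μ * t) • p t)) t := by
  have hexp : HasDerivAt (fun s : ℝ => Complex.exp (μ * s)) (Complex.exp (μ * t) * μ) t := by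
    simpa using ((hasDerivAt_id t).ofReal_comp.const_mul μ).cexp
  convert hexp.fun_smul hp using 1
  simp only [LinearMap.sub_apply, LinearMap.smul_apply, Module.End.one_apply, map_smul]
  module

theorem tendsto_cexp_mul_smul_truncExpOrbit {μ : ℂ} (hμ : μ.re < 0) (N : Module.End ℂ E)
    (K : ℕ) (v : E) :
    Tendsto (fun t : ℝ => Complex.exp (μ * t) • truncExpOrbit N K v t) atTop (𝓝 0) := by
  simp only [truncExpOrbit, Finset.smul_sum]
  rw [← Finset.sum_const_zero (s := Finset.range (K + 1))]
  refine tendsto_finsetSum _ fun k _ => ?_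
  rw [tendsto_zero_iff_norm_tendsto_zero]
  have h := (tendsto_pow_mul_exp_mul_atTop_nhds_zero k hμ).mul_const (‖(N ^ k) v‖ / k !)
  rw [zero_mul] at h
  refine h.congr' ?_
  filter_upwards [eventually_ge_atTop 0] with t ht
  rw [norm_smul, norm_smul, Complex.norm_exp, Real.norm_eq_abs, abs_div,
    abs_of_nonneg (pow_nonneg ht k), Nat.abs_cast]
  simp only [Complex.mul_re, Complex.ofReal_re, Complex.ofReal_im, mul_zero, sub_zero]
  ring

noncomputable def decayingInitialValues (T : Module.End ℂ E) : Submodule ℂ E where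
  carrier := {v | ∃ g : ℝ → E, g 0 = v ∧ (∀ t, HasDerivAt g (T (g t)) t) ∧
    Tendsto g atTop (𝓝 0)}
  zero_mem' := ⟨0, rfl, fun t => by simp, tendsto_const_nhds⟩
  add_mem' := by
    rintro _ _ ⟨g₁, rfl, hg₁, hg₁0⟩ ⟨g₂, rfl, hg₂, hg₂0⟩
    exact ⟨fun t => g₁ t + g₂ t, rfl, fun t => by simpa using (hg₁ t).fun_add (hg₂ t),
      by simpa using hg₁0.add hg₂0⟩
  smul_mem' := by
    rintro c _ ⟨g, rfl, hg, hg0⟩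
    exact ⟨fun t => c • g t, rfl, fun t => by simpa using (hg t).fun_const_smul c,
      by simpa using hg0.const_smul c⟩

theorem maxGenEigenspace_le_decayingInitialValues {T : Module.End ℂ E} {μ : ℂ} (hμ : μ.re < 0) :
    T.maxGenEigenspace μ ≤ decayingInitialValues T := by
  intro v hv
  obtain ⟨K, hK⟩ := (T.mem_maxGenEigenspace μ v).1 hv
  have hK' : ((T - μ • 1) ^ (K + 1)) v = 0 := by
    rw [pow_succ', Module.End.mul_apply, hK, map_zero]
  -- `e^{μt} e^{t(T - μ)} v`, where the exponential series of `T - μ` stops at `k = K` on `v`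
  exact ⟨fun t => Complex.exp (μ * t) • truncExpOrbit (T - μ • 1) K v t,
    by simp [truncExpOrbit_zero], fun t => (hasDerivAt_truncExpOrbit hK' t).cexp_mul_smul,
    tendsto_cexp_mul_smul_truncExpOrbit hμ _ _ _⟩

theorem decayingInitialValues_eq_top [FiniteDimensional ℂ E] {T : Module.End ℂ E}
    (hT : ∀ μ, T.HasEigenvalue μ → μ.re < 0) : decayingInitialValues T = ⊤ := by
  rw [eq_top_iff, ← Module.End.iSup_maxGenEigenspace_eq_top T, iSup_le_iff]
  intro μ
  by_cases hμ : T.HasEigenvalue μ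
  · exact maxGenEigenspace_le_decayingInitialValues (hT μ hμ)
  · have : T.maxGenEigenspace μ = ⊥ := by
      by_contra h
      exact hμ (Module.End.HasUnifEigenvalue.lt zero_lt_one h)
    simp [this]

theorem tendsto_zero_of_hasDerivAt_of_re_neg [FiniteDimensional ℂ E] {T : Module.End ℂ E}
    (hT : ∀ μ, T.HasEigenvalue μ → μ.re < 0) {f : ℝ → E} (hf : ∀ t, HasDerivAt f (T (f t)) t) :
    Tendsto f atTop (𝓝 0) := by
  obtain ⟨g, hg0, hg, hg_lim⟩ : f 0 ∈ decayingInitialValues T := by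
    simp [decayingInitialValues_eq_top hT]
  have hlip := (LinearMap.toContinuousLinearMap T).lipschitz.lipschitzOnWith (s := univ)
  have : f = g := ODE_solution_unique_univ (v := fun _ => T) (s := fun _ => univ)
    (fun _ => hlip) (fun t => ⟨hf t, trivial⟩) (fun t => ⟨hg t, trivial⟩) hg0.symm
  rwa [this]

end LinearODE

theorem HasDerivAt.matrix_mulVec {𝕜 : Type*} [NontriviallyNormedField 𝕜] {m n : Type*}
    [Fintype n] (M : Matrix m n 𝕜) {x : 𝕜 → n → 𝕜} {x' : n → 𝕜} {t : 𝕜}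
    (hx : HasDerivAt x x' t) : HasDerivAt (fun s => M *ᵥ x s) (M *ᵥ x') t :=
  hasDerivAt_pi.2 fun i => by
    simpa [mulVec, dotProduct] using
      HasDerivAt.fun_sum fun j _ => (hasDerivAt_pi.1 hx j).const_mul (M i j)

theorem Hurwitz.tendsto_zero_of_hasDerivAt {n : ℕ} {A : Matrix (Fin n) (Fin n) ℝ}
    (hA : Hurwitz A) {e : ℝ → Fin n → ℝ} (he : ∀ t, HasDerivAt e (A *ᵥ e t) t) :
    Tendsto e atTop (𝓝 0) := by
  set B := A.map (algebraMap ℝ ℂ)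
  have hB : ∀ μ, Module.End.HasEigenvalue (toLin' B) μ → μ.re < 0 := fun μ hμ =>
    hA μ (spectrum_toLin' B ▸ hμ.mem_spectrum)
  have hf : ∀ t, HasDerivAt (fun s i => (e s i : ℂ)) (toLin' B (fun i => (e t i : ℂ))) t := by
    refine fun t => hasDerivAt_pi.2 fun i => ?_
    have := (hasDerivAt_pi.1 (he t) i).ofReal_comp
    rwa [← Complex.ofRealHom_eq_coe, RingHom.map_mulVec] at this
  have hf_lim := tendsto_pi_nhds.1 (tendsto_zero_of_hasDerivAt_of_re_neg hB hf)
  exact tendsto_pi_nhds.2 fun i => by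
    simpa [Function.comp_def] using (Complex.continuous_re.tendsto 0).comp (hf_lim i)

/-- If `A` is Hurwitz and `Π` solves the Francis equations `Π S = A Π + P`, `0 = C Π + Q`,
then along every solution of `ż = Az + Pw`, `ẇ = Sw`, the output `y = Cz + Qw` tends to `0`. -/
theorem stmt3 {n m p : ℕ}
    (A : Matrix (Fin n) (Fin n) ℝ) (S : Matrix (Fin m) (Fin m) ℝ)
    (P : Matrix (Fin n) (Fin m) ℝ) (C : Matrix (Fin p) (Fin n) ℝ)
    (Q : Matrix (Fin p) (Fin m) ℝ) (Pi : Matrix (Fin n) (Fin m) ℝ)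
    (hA : Hurwitz A)
    (hFrancis1 : Pi * S = A * Pi + P)
    (hFrancis2 : (0 : Matrix (Fin p) (Fin m) ℝ) = C * Pi + Q)
    (z : ℝ → Fin n → ℝ) (w : ℝ → Fin m → ℝ)
    (hz : ∀ t : ℝ, HasDerivAt z (A.mulVec (z t) + P.mulVec (w t)) t)
    (hw : ∀ t : ℝ, HasDerivAt w (S.mulVec (w t)) t) :
    Tendsto (fun t : ℝ => C.mulVec (z t) + Q.mulVec (w t)) atTop (nhds 0) := by
  set e : ℝ → Fin n → ℝ := fun t => z t - Pi *ᵥ w t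
  have he : ∀ t, HasDerivAt e (A *ᵥ e t) t := by
    intro t
    refine ((hz t).fun_sub ((hw t).matrix_mulVec Pi)).congr_deriv ?_
    simp only [e, mulVec_mulVec, hFrancis1, add_mulVec, mulVec_sub]
    abel
  have hy : ∀ t, C *ᵥ z t + Q *ᵥ w t = C *ᵥ e t := by
    have hCPi : C * Pi = -Q := by rw [eq_neg_iff_add_eq_zero, ← hFrancis2]
    simp [e, mulVec_sub, mulVec_mulVec, hCPi, neg_mulVec]
  have hCe : Tendsto (fun t => C *ᵥ e t) atTop (𝓝 0) := by
    have hC : Continuous (C *ᵥ ·) := continuous_const.matrix_mulVec continuous_id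
    simpa [Function.comp_def] using (hC.tendsto 0).comp (hA.tendsto_zero_of_hasDerivAt he)
  exact hCe.congr fun t => (hy t).symm
end

section
/- Along any trajectory of the system ẋ₁ = 0, ẋ₂ = −(2x₂ + u)/(1 + x₁²), the function V(x) = x₂²/2 satisfies V(x(t)) ≤ max{ V(x(0)) e^{−t/(1 + x₁(0)²)}, ‖u‖_∞² } for all t ≥ 0. -/
/-!
Since `x₁` is constant, `V' = -x₂ (2 x₂ + u) / (1 + x₁(0)²)`, and as soon as `V > ‖u‖∞²` we have
`x₂ (2 x₂ + u) > V`, hence `V' < -V / (1 + x₁(0)²)`. A function with `f' < -c f` above a level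
`M ≥ 0` either stays above `M` on `[0, t]`, and then lies below the barrier `f(0) e^{-c s}`, or it
reaches `M` and can never exceed it again.
-/

open Set Real

section Fencing

variable {f f' : ℝ → ℝ} {a b c M : ℝ}

theorem image_le_of_deriv_right_neg_above (hf : ContinuousOn f (Icc a b))
    (hf' : ∀ x ∈ Ico a b, HasDerivWithinAt f (f' x) (Ici x) x) (ha : f a ≤ M)
    (hneg : ∀ x ∈ Ico a b, M < f x → f' x < 0) : ∀ ⦃x⦄, x ∈ Icc a b → f x ≤ M := by
  intro x hx
  refine le_of_forall_pos_le_add fun ε hε => ?_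
  exact image_le_of_deriv_right_lt_deriv_boundary hf hf' (B := fun _ => M + ε) (by linarith)
    (fun y => hasDerivAt_const y _) (fun y hy hfy => hneg y hy (by linarith)) hx

theorem image_le_mul_exp_of_deriv_right_lt (hf : ContinuousOn f (Icc a b))
    (hf' : ∀ x ∈ Ico a b, HasDerivWithinAt f (f' x) (Ici x) x)
    (hdecay : ∀ x ∈ Ico a b, f' x < -c * f x) :
    ∀ ⦃x⦄, x ∈ Icc a b → f x ≤ f a * exp (-c * (x - a)) := by
  have hB : ∀ x, HasDerivAt (fun y => f a * exp (-c * (y - a)))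
      (-c * (f a * exp (-c * (x - a)))) x := fun x => by
    have := (((hasDerivAt_id x).sub_const a).const_mul (-c)).exp.const_mul (f a)
    exact this.congr_deriv (by simp only [id]; ring)
  refine image_le_of_deriv_right_lt_deriv_boundary hf hf' (by simp) hB fun x hx hfx => ?_
  simpa only [← hfx] using hdecay x hx

theorem le_max_mul_exp_of_deriv_right_lt (hc : 0 ≤ c) (hM : 0 ≤ M) (hab : a ≤ b)
    (hf : ContinuousOn f (Icc a b))
    (hf' : ∀ x ∈ Ico a b, HasDerivWithinAt f (f' x) (Ici x) x)
    (hdiss : ∀ x ∈ Ico a b, M < f x → f' x < -c * f x) :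
    f b ≤ max (f a * exp (-c * (b - a))) M := by
  by_cases hreach : ∃ s ∈ Icc a b, f s ≤ M
  · obtain ⟨s, hs, hfs⟩ := hreach
    have hsub : Icc s b ⊆ Icc a b := Icc_subset_Icc_left hs.1
    have hneg : ∀ x ∈ Ico s b, M < f x → f' x < 0 := fun x hx hMx => by
      have hx' : x ∈ Ico a b := ⟨hs.1.trans hx.1, hx.2⟩
      nlinarith [hdiss x hx' hMx]
    exact le_max_of_le_right <| image_le_of_deriv_right_neg_above (hf.mono hsub)
      (fun x hx => hf' x ⟨hs.1.trans hx.1, hx.2⟩) hfs hneg (right_mem_Icc.2 hs.2)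
  · push Not at hreach
    exact le_max_of_le_left <| image_le_mul_exp_of_deriv_right_lt hf hf'
      (fun x hx => hdiss x hx (hreach x (Ico_subset_Icc_self hx))) (right_mem_Icc.2 hab)

end Fencing

theorem half_sq_lt_mul_two_mul_add {x v U : ℝ} (hv : |v| ≤ U) (hx : U ^ 2 < x ^ 2 / 2) :
    x ^ 2 / 2 < x * (2 * x + v) := by
  have hxU : U < |x| := (le_abs_self U).trans_lt <|
    abs_lt_of_sq_lt_sq (by rw [sq_abs]; linarith [sq_nonneg x]) (abs_nonneg x)
  have hxv : -(|x| * U) ≤ x * v :=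
    calc -(|x| * U) ≤ -(|x| * |v|) := neg_le_neg (mul_le_mul_of_nonneg_left hv (abs_nonneg x))
      _ = -|x * v| := by rw [abs_mul]
      _ ≤ x * v := neg_abs_le _
  nlinarith [abs_mul_abs_self x]

/-- Along any trajectory of `ẋ₁ = 0`, `ẋ₂ = −(2x₂ + u)/(1 + x₁²)`, the function
`V(x) = x₂²/2` satisfies `V(x(t)) ≤ max {V(x(0)) e^{−t/(1+x₁(0)²)}, ‖u‖∞²}` for `t ≥ 0`. -/
theorem stmt8 (x₁ x₂ u : ℝ → ℝ) (U : ℝ)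
    (hU : ∀ t : ℝ, 0 ≤ t → |u t| ≤ U)
    (hx₁ : ∀ t : ℝ, 0 ≤ t → HasDerivAt x₁ 0 t)
    (hx₂ : ∀ t : ℝ, 0 ≤ t → HasDerivAt x₂ (-(2 * x₂ t + u t) / (1 + (x₁ t) ^ 2)) t) :
    ∀ t : ℝ, 0 ≤ t →
      (x₂ t) ^ 2 / 2 ≤
        max (((x₂ 0) ^ 2 / 2) * Real.exp (-t / (1 + (x₁ 0) ^ 2))) (U ^ 2) := by
  intro t ht
  set τ := 1 + x₁ 0 ^ 2
  have hτ : 0 < τ := by positivity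
  have hx₁_const : ∀ s, 0 ≤ s → x₁ s = x₁ 0 := fun s hs =>
    constant_of_has_deriv_right_zero (fun r hr => (hx₁ r hr.1).continuousAt.continuousWithinAt)
      (fun r hr => (hx₁ r hr.1).hasDerivWithinAt) s (right_mem_Icc.2 hs)
  have hV : ∀ s, 0 ≤ s → HasDerivAt (fun s => x₂ s ^ 2 / 2)
      (-τ⁻¹ * (x₂ s * (2 * x₂ s + u s))) s := fun s hs => by
    have := ((hx₂ s hs).fun_pow 2).div_const 2
    rw [hx₁_const s hs] at this
    exact this.congr_deriv (by field_simp; ring)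
  have hdiss : ∀ s, 0 ≤ s → U ^ 2 < x₂ s ^ 2 / 2 →
      -τ⁻¹ * (x₂ s * (2 * x₂ s + u s)) < -τ⁻¹ * (x₂ s ^ 2 / 2) := fun s hs hUs =>
    mul_lt_mul_of_neg_left (half_sq_lt_mul_two_mul_add (hU s hs) hUs)
      (neg_neg_of_pos (inv_pos.2 hτ))
  have hbound := le_max_mul_exp_of_deriv_right_lt (inv_nonneg.2 hτ.le) (sq_nonneg U) ht
    (fun s hs => (hV s hs.1).continuousAt.continuousWithinAt)
    (fun s hs => (hV s hs.1).hasDerivWithinAt) (fun s hs => hdiss s hs.1)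
  convert hbound using 4
  ring
end

section
/- The system ẋ₁ = 0, ẋ₂ = −(2x₂ + u)/(1 + x₁²) with output y = x₂ is not state-independent IOS: there exist no β ∈ KL and γ ∈ K such that |x₂(t)| ≤ β(|x₂(0)|, t) + γ(‖u‖_∞) for all trajectories, because with u ≡ 0 the decay rate of x₂(t) = x₂(0)e^{−t/(1+x₁(0)²)} depends on x₁(0) and can be made arbitrarily slow. -/
open Set Filter

/-- The system `ẋ₁ = 0`, `ẋ₂ = −(2x₂ + u)/(1 + x₁²)` with output `y = x₂` is not
state-independent IOS: there are no `β ∈ KL` and `γ ∈ K` with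
`|x₂(t)| ≤ β(|x₂(0)|, t) + γ(‖u‖∞)` along all trajectories. -/
theorem stmt9 :
    ¬ ∃ β : ℝ → ℝ → ℝ, ∃ γ : ℝ → ℝ, ClassKL β ∧ ClassK γ ∧
        ∀ (x₁ x₂ u : ℝ → ℝ),
          (∀ t : ℝ, 0 ≤ t → HasDerivAt x₁ 0 t) →
          (∀ t : ℝ, 0 ≤ t → HasDerivAt x₂ (-(2 * x₂ t + u t) / (1 + (x₁ t) ^ 2)) t) →
          ∀ t : ℝ, 0 ≤ t → |x₂ t| ≤ β (|x₂ 0|) t + γ (⨆ s : ℝ, |u s|) := by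
  rintro ⟨β, γ, hβ, hγ, H⟩
  -- β 1 t → 0 as t → ∞
  have h1 : Tendsto (β 1) atTop (nhds 0) := (hβ.2 1 (by norm_num)).2.2
  have h2 : ∀ᶠ t in atTop, β 1 t < 1/2 := by
    have := h1.eventually (eventually_lt_nhds (show (0:ℝ) < 1/2 by norm_num))
    exact this
  obtain ⟨t₁, ht₁⟩ := h2.exists_forall_of_atTop
  set t₀ : ℝ := max t₁ 1 with ht₀def
  have ht₀1 : (1:ℝ) ≤ t₀ := le_max_right _ _
  have ht₀0 : (0:ℝ) ≤ t₀ := by linarith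
  have hβt₀ : β 1 t₀ < 1/2 := ht₁ t₀ (le_max_left _ _)
  -- parameters
  set a : ℝ := 2 * t₀ + 1 with hadef
  set k : ℝ := -2 / (1 + a ^ 2) with hkdef
  have hden : (0:ℝ) < 1 + a ^ 2 := by positivity
  -- trajectories
  set x₂ : ℝ → ℝ := fun t => Real.exp (k * t) with hx₂def
  have hderiv : ∀ t : ℝ, 0 ≤ t →
      HasDerivAt x₂ (-(2 * x₂ t + (fun _ => (0:ℝ)) t) / (1 + ((fun _ => a) t) ^ 2)) t := by
    intro t _
    have h := ((hasDerivAt_id t).const_mul k).exp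
    simp only [mul_one, id_eq] at h
    convert h using 1
    simp only [hx₂def, hkdef]
    ring
  have key := H (fun _ => a) x₂ (fun _ => 0)
    (fun t _ => hasDerivAt_const t a) hderiv t₀ ht₀0
  have hx₂0 : x₂ 0 = 1 := by simp [hx₂def]
  have hsup : (⨆ s : ℝ, |(fun _ => (0:ℝ)) s|) = 0 := by simp
  rw [hx₂0, hsup, hγ.2.2, add_zero] at key
  simp only [abs_one] at key
  -- lower bound on |x₂ t₀|
  have hk_small : -k * t₀ < 1/2 := by
    rw [hkdef]
    have ha : 4 * t₀ < 1 + a ^ 2 := by nlinarith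
    rw [neg_div, neg_neg]
    rw [div_mul_eq_mul_div, div_lt_iff₀ hden]
    nlinarith
  have hlow : 1/2 < x₂ t₀ := by
    have := Real.add_one_le_exp (k * t₀)
    have hx : x₂ t₀ = Real.exp (k * t₀) := rfl
    nlinarith
  have habs : |x₂ t₀| = x₂ t₀ := abs_of_pos (by linarith)
  rw [habs] at key
  linarith
end

section
/- With h₀ defined as the supremum of |y(t,ξ,u)| − γ(‖u‖) over t ≥ 0 and inputs u for a forward-complete IOS system, h₀ satisfies the output-Lagrange-type estimate h₀(x(τ,ξ,v)) ≤ h₀(ξ) + γ(‖v‖) ≤ max{2h₀(ξ), 2γ(‖v‖)} for every input v and every τ ≥ 0. -/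
open Set Filter

/-- An input is (globally) bounded. -/
def IsBddInput {m : ℕ} (u : ℝ → EuclideanSpace ℝ (Fin m)) : Prop :=
  ∃ C, ∀ t : ℝ, ‖u t‖ ≤ C

/-- The sup norm `‖u‖∞` of an input. -/
noncomputable def unorm {m : ℕ} (u : ℝ → EuclideanSpace ℝ (Fin m)) : ℝ :=
  ⨆ t : ℝ, ‖u t‖

/-- `h₀(ξ) := sup_{t ≥ 0, u} (|y(t,ξ,u)| − γ(‖u‖))`, where `y(t,ξ,u) = h (X t ξ u)` and `X`
is the solution map of the system. -/
noncomputable def hZero {n m p : ℕ}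
    (X : ℝ → EuclideanSpace ℝ (Fin n) → (ℝ → EuclideanSpace ℝ (Fin m)) →
      EuclideanSpace ℝ (Fin n))
    (h : EuclideanSpace ℝ (Fin n) → EuclideanSpace ℝ (Fin p)) (γ : ℝ → ℝ)
    (ξ : EuclideanSpace ℝ (Fin n)) : ℝ :=
  sSup {a | ∃ t, 0 ≤ t ∧ ∃ u, IsBddInput u ∧ a = ‖h (X t ξ u)‖ - γ (unorm u)}

/-- The concatenation `v #_τ u` of two inputs. -/
noncomputable def concatInput {m : ℕ} (τ : ℝ) (v u : ℝ → EuclideanSpace ℝ (Fin m)) :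
    ℝ → EuclideanSpace ℝ (Fin m) :=
  fun t => if t < τ then v t else u (t - τ)


lemma unorm_nonneg' {m : ℕ} (u : ℝ → EuclideanSpace ℝ (Fin m)) : 0 ≤ unorm u :=
  Real.iSup_nonneg fun _ => norm_nonneg _

lemma norm_le_unorm' {m : ℕ} (u : ℝ → EuclideanSpace ℝ (Fin m)) (hu : IsBddInput u) (t : ℝ) :
    ‖u t‖ ≤ unorm u := by
  obtain ⟨C, hC⟩ := hu
  exact le_ciSup ⟨C, by rintro _ ⟨s, rfl⟩; exact hC s⟩ t

/-- For a forward-complete IOS system, `h₀` satisfies the output-Lagrange-type estimate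
`h₀(x(τ,ξ,v)) ≤ h₀(ξ) + γ(‖v‖) ≤ max {2 h₀(ξ), 2 γ(‖v‖)}`. -/
theorem stmt11 {n m p : ℕ}
    (X : ℝ → EuclideanSpace ℝ (Fin n) → (ℝ → EuclideanSpace ℝ (Fin m)) →
      EuclideanSpace ℝ (Fin n))
    (h : EuclideanSpace ℝ (Fin n) → EuclideanSpace ℝ (Fin p))
    (β : ℝ → ℝ → ℝ) (γ : ℝ → ℝ) (hβ : ClassKL β) (hγ : ClassKInfty γ)
    (hX0 : ∀ ξ u, X 0 ξ u = ξ)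
    (hconcat : ∀ τ : ℝ, 0 ≤ τ → ∀ t : ℝ, 0 ≤ t → ∀ ξ v u,
      X t (X τ ξ v) u = X (t + τ) ξ (concatInput τ v u))
    (hIOS : ∀ t : ℝ, 0 ≤ t → ∀ ξ, ∀ u, IsBddInput u →
      ‖h (X t ξ u)‖ ≤ max (β ‖ξ‖ t) (γ (unorm u))) :
    ∀ ξ, ∀ v, IsBddInput v → ∀ τ : ℝ, 0 ≤ τ →
      hZero X h γ (X τ ξ v) ≤ hZero X h γ ξ + γ (unorm v) ∧
      hZero X h γ (X τ ξ v) ≤ max (2 * hZero X h γ ξ) (2 * γ (unorm v)) := by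
  have hγK : ClassK γ := hγ.1
  have hγmono : MonotoneOn γ (Ici 0) := hγK.2.1.monotoneOn
  have hγ0 : γ 0 = 0 := hγK.2.2
  have hγnn : ∀ r, 0 ≤ r → 0 ≤ γ r := fun r hr => by
    rw [← hγ0]; exact hγmono (mem_Ici.mpr le_rfl) (mem_Ici.mpr hr) hr
  have hzero_input : IsBddInput (fun _ : ℝ => (0 : EuclideanSpace ℝ (Fin m))) :=
    ⟨0, fun t => by simp⟩
  have hunorm0 : unorm (fun _ : ℝ => (0 : EuclideanSpace ℝ (Fin m))) = 0 := by
    simp [unorm]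
  set S := fun ζ : EuclideanSpace ℝ (Fin n) =>
    {a : ℝ | ∃ t, 0 ≤ t ∧ ∃ u, IsBddInput u ∧ a = ‖h (X t ζ u)‖ - γ (unorm u)} with hS
  have hZS : ∀ ζ, hZero X h γ ζ = sSup (S ζ) := fun ζ => rfl
  have hmem : ∀ ζ, (‖h ζ‖ : ℝ) ∈ S ζ := fun ζ =>
    ⟨0, le_rfl, _, hzero_input, by rw [hX0, hunorm0, hγ0, sub_zero]⟩
  have hbdd : ∀ ζ, BddAbove (S ζ) := by
    intro ζ
    refine ⟨β ‖ζ‖ 0, ?_⟩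
    rintro a ⟨t, ht, u, hu, rfl⟩
    have hβn : ‖h (X t ζ u)‖ ≤ max (β ‖ζ‖ t) (γ (unorm u)) := hIOS t ht ζ u hu
    have hβt0 : β ‖ζ‖ t ≤ β ‖ζ‖ 0 :=
      (hβ.2 ‖ζ‖ (mem_Ici.mpr (norm_nonneg _))).2.1 (mem_Ici.mpr le_rfl) (mem_Ici.mpr ht) ht
    have hβnn : 0 ≤ β ‖ζ‖ t := by
      have hK := hβ.1 t (mem_Ici.mpr ht)
      rw [show (0:ℝ) = β 0 t from hK.2.2.symm]
      exact hK.2.1.monotoneOn (mem_Ici.mpr le_rfl) (mem_Ici.mpr (norm_nonneg _)) (norm_nonneg _)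
    have hγu : 0 ≤ γ (unorm u) := hγnn _ (unorm_nonneg' u)
    rcases le_max_iff.mp hβn with h1 | h2
    · linarith
    · linarith
  have hnn : ∀ ζ, 0 ≤ hZero X h γ ζ := fun ζ =>
    le_trans (norm_nonneg _) (le_csSup (hbdd ζ) (hmem ζ))
  intro ξ v hv τ hτ
  have key : hZero X h γ (X τ ξ v) ≤ hZero X h γ ξ + γ (unorm v) := by
    rw [hZS]
    apply Real.sSup_le
    · rintro a ⟨t, ht, u, hu, rfl⟩
      obtain ⟨Cu, hCu⟩ := hu
      obtain ⟨Cv, hCv⟩ := hv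
      set w := concatInput τ v u with hw
      have hwb : IsBddInput w := by
        refine ⟨max Cv Cu, fun s => ?_⟩
        simp only [hw, concatInput]
        split_ifs
        · exact le_max_of_le_left (hCv s)
        · exact le_max_of_le_right (hCu _)
      have hwle : unorm w ≤ max (unorm v) (unorm u) := by
        apply ciSup_le
        intro s
        simp only [hw, concatInput]
        split_ifs
        · exact le_max_of_le_left (norm_le_unorm' v ⟨Cv, hCv⟩ s)
        · exact le_max_of_le_right (norm_le_unorm' u ⟨Cu, hCu⟩ _)
      have hmemS : ‖h (X (t + τ) ξ w)‖ - γ (unorm w) ∈ S ξ :=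
        ⟨t + τ, by linarith, w, hwb, rfl⟩
      have h1 : ‖h (X (t + τ) ξ w)‖ - γ (unorm w) ≤ hZero X h γ ξ := by
        rw [hZS]; exact le_csSup (hbdd ξ) hmemS
      have hrw : X t (X τ ξ v) u = X (t + τ) ξ w := hconcat τ hτ t ht ξ v u
      have hγw : γ (unorm w) - γ (unorm u) ≤ γ (unorm v) := by
        rcases le_total (unorm v) (unorm u) with hle | hle
        · have hle2 : γ (unorm w) ≤ γ (unorm u) :=
            hγmono (mem_Ici.mpr (unorm_nonneg' w)) (mem_Ici.mpr (unorm_nonneg' u))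
              (le_trans hwle (max_le hle le_rfl))
          have := hγnn _ (unorm_nonneg' v)
          linarith
        · have hle2 : γ (unorm w) ≤ γ (unorm v) :=
            hγmono (mem_Ici.mpr (unorm_nonneg' w)) (mem_Ici.mpr (unorm_nonneg' v))
              (le_trans hwle (max_le le_rfl hle))
          have := hγnn _ (unorm_nonneg' u)
          linarith
      rw [hrw]
      linarith
    · have h1 := hγnn _ (unorm_nonneg' v); have h2 := hnn ξ; linarith
  refine ⟨key, le_trans key ?_⟩
  rcases le_total (hZero X h γ ξ) (γ (unorm v)) with hle | hle
  · have := le_max_right (2 * hZero X h γ ξ) (2 * γ (unorm v)); linarith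
  · have := le_max_left (2 * hZero X h γ ξ) (2 * γ (unorm v)); linarith
end

section
/- With h₀ defined as above for a forward-complete IOS system, h₀ also satisfies the IOS-type estimate h₀(x(τ,ξ,v)) ≤ β(|ξ|,τ) + γ(‖v‖_{[0,τ)}) for every input v and every τ ≥ 0, with the same β and γ as the original system. -/
open Set Filter

/-- The sup norm `‖v‖_{[0,τ)}` of an input restricted to `[0,τ)`. -/
noncomputable def unormOn {m : ℕ} (v : ℝ → EuclideanSpace ℝ (Fin m)) (τ : ℝ) : ℝ :=
  sSup {a | ∃ t, 0 ≤ t ∧ t < τ ∧ a = ‖v t‖}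

/-- For a forward-complete IOS system, `h₀` also satisfies the IOS-type estimate
`h₀(x(τ,ξ,v)) ≤ β(|ξ|,τ) + γ(‖v‖_{[0,τ)})`, with the same `β` and `γ`. -/
theorem stmt12 {n m p : ℕ}
    (X : ℝ → EuclideanSpace ℝ (Fin n) → (ℝ → EuclideanSpace ℝ (Fin m)) →
      EuclideanSpace ℝ (Fin n))
    (h : EuclideanSpace ℝ (Fin n) → EuclideanSpace ℝ (Fin p))
    (β : ℝ → ℝ → ℝ) (γ : ℝ → ℝ) (hβ : ClassKL β) (hγ : ClassKInfty γ)
    (hX0 : ∀ ξ u, X 0 ξ u = ξ)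
    (hconcat : ∀ τ : ℝ, 0 ≤ τ → ∀ t : ℝ, 0 ≤ t → ∀ ξ v u,
      X t (X τ ξ v) u = X (t + τ) ξ (concatInput τ v u))
    (hIOS : ∀ t : ℝ, 0 ≤ t → ∀ ξ, ∀ u, IsBddInput u →
      ‖h (X t ξ u)‖ ≤ max (β ‖ξ‖ t) (γ (unorm u))) :
    ∀ ξ, ∀ v, IsBddInput v → ∀ τ : ℝ, 0 ≤ τ →
      hZero X h γ (X τ ξ v) ≤ β ‖ξ‖ τ + γ (unormOn v τ) := by

  intro ξ v hv τ hτ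
  obtain ⟨⟨hγcont, hγmono, hγ0⟩, -⟩ := hγ
  obtain ⟨hβ1, hβ2⟩ := hβ
  have hγm : MonotoneOn γ (Ici 0) := hγmono.monotoneOn
  have hγnn : ∀ x : ℝ, 0 ≤ x → 0 ≤ γ x := by
    intro x hx
    have := hγm (self_mem_Ici) (mem_Ici.2 hx) hx
    rw [hγ0] at this; exact this
  -- basic facts about unorm
  have bdd_range : ∀ (u : ℝ → EuclideanSpace ℝ (Fin m)), IsBddInput u →
      BddAbove (Set.range fun t => ‖u t‖) := by
    rintro u ⟨C, hC⟩
    exact ⟨C, by rintro x ⟨s, rfl⟩; exact hC s⟩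
  have norm_le_unorm : ∀ (u : ℝ → EuclideanSpace ℝ (Fin m)), IsBddInput u →
      ∀ t, ‖u t‖ ≤ unorm u := by
    intro u hu t
    exact le_ciSup (bdd_range u hu) t
  have unorm_nonneg : ∀ (u : ℝ → EuclideanSpace ℝ (Fin m)), IsBddInput u →
      0 ≤ unorm u := by
    intro u hu
    exact le_trans (norm_nonneg _) (norm_le_unorm u hu 0)
  -- facts about unormOn
  obtain ⟨Cv, hCv⟩ := hv
  have hbOn : BddAbove {a | ∃ t, 0 ≤ t ∧ t < τ ∧ a = ‖v t‖} :=
    ⟨Cv, by rintro a ⟨t, -, -, rfl⟩; exact hCv t⟩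
  have norm_le_unormOn : ∀ t, 0 ≤ t → t < τ → ‖v t‖ ≤ unormOn v τ := by
    intro t ht0 htτ
    exact le_csSup hbOn ⟨t, ht0, htτ, rfl⟩
  have unormOn_nonneg : 0 ≤ unormOn v τ := by
    rcases lt_or_ge 0 τ with hpos | hneg
    · exact le_trans (norm_nonneg _) (norm_le_unormOn 0 le_rfl hpos)
    · have hempty : {a | ∃ t, 0 ≤ t ∧ t < τ ∧ a = ‖v t‖} = (∅ : Set ℝ) := by
        ext a
        simp only [mem_setOf_eq, mem_empty_iff_false, iff_false]
        rintro ⟨t, ht0, htτ, -⟩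
        exact absurd (htτ.trans_le hneg) (not_lt.2 ht0)
      unfold unormOn
      rw [hempty, Real.sSup_empty]
  have hβnn : 0 ≤ β ‖ξ‖ τ := by
    have hK := hβ1 τ (mem_Ici.2 hτ)
    have h0 : β 0 τ = 0 := hK.2.2
    have := hK.2.1.monotoneOn (self_mem_Ici) (mem_Ici.2 (norm_nonneg ξ)) (norm_nonneg ξ)
    simp only [h0] at this; exact this
  have hγOn_nn : 0 ≤ γ (unormOn v τ) := hγnn _ unormOn_nonneg
  apply Real.sSup_le
  · rintro a ⟨t, ht, u, hu, rfl⟩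
    obtain ⟨Cu, hCu⟩ := hu
    -- causality: X τ ξ v = X τ ξ ṽ with ṽ zero on negative times
    set vz : ℝ → EuclideanSpace ℝ (Fin m) := concatInput 0 (fun _ => 0) v with hvz
    have hcause : X τ ξ v = X τ ξ vz := by
      have := hconcat 0 le_rfl τ hτ ξ (fun _ => 0) v
      rw [hX0, add_zero] at this
      exact this
    set w : ℝ → EuclideanSpace ℝ (Fin m) := concatInput τ vz u with hw
    have hcomb : X t (X τ ξ v) u = X (t + τ) ξ w := by
      rw [hcause]
      exact hconcat τ hτ t ht ξ vz u
    have hwbdd : IsBddInput w := by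
      refine ⟨max Cv Cu ⊔ 0, fun s => ?_⟩
      simp only [hw, hvz, concatInput, sub_zero]
      split_ifs with h1 h2
      · simp
      · exact le_sup_of_le_left (le_max_of_le_left (hCv s))
      · exact le_sup_of_le_left (le_max_of_le_right (hCu (s - τ)))
    have hwub : unorm w ≤ max (unormOn v τ) (unorm u) := by
      refine ciSup_le fun s => ?_
      simp only [hw, hvz, concatInput, sub_zero]
      split_ifs with h1 h2
      · simp only [norm_zero]
        exact le_max_of_le_right (unorm_nonneg u ⟨Cu, hCu⟩)
      · exact le_max_of_le_left (norm_le_unormOn s (not_lt.1 h2) h1)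
      · exact le_max_of_le_right (norm_le_unorm u ⟨Cu, hCu⟩ (s - τ))
    have hwnn : 0 ≤ unorm w := unorm_nonneg w hwbdd
    have hγw : γ (unorm w) ≤ max (γ (unormOn v τ)) (γ (unorm u)) := by
      have hMnn : 0 ≤ max (unormOn v τ) (unorm u) :=
        le_max_of_le_left unormOn_nonneg
      have hm : γ (unorm w) ≤ γ (max (unormOn v τ) (unorm u)) :=
        hγm (mem_Ici.2 hwnn) (mem_Ici.2 hMnn) hwub
      rcases max_choice (unormOn v τ) (unorm u) with hc | hc <;> rw [hc] at hm
      · exact hm.trans (le_max_left _ _)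
      · exact hm.trans (le_max_right _ _)
    have hβmono : β ‖ξ‖ (t + τ) ≤ β ‖ξ‖ τ := by
      have := (hβ2 ‖ξ‖ (mem_Ici.2 (norm_nonneg ξ))).2.1
        (mem_Ici.2 hτ) (mem_Ici.2 (by linarith : (0:ℝ) ≤ t + τ)) (le_add_of_nonneg_left ht)
      exact this
    have hmain : ‖h (X t (X τ ξ v) u)‖ ≤
        max (β ‖ξ‖ (t + τ)) (γ (unorm w)) := by
      rw [hcomb]
      exact hIOS (t + τ) (by linarith) ξ w hwbdd
    have hγu_nn : 0 ≤ γ (unorm u) := hγnn _ (unorm_nonneg u ⟨Cu, hCu⟩)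
    have hfinal : ‖h (X t (X τ ξ v) u)‖ ≤
        β ‖ξ‖ τ + γ (unormOn v τ) + γ (unorm u) := by
      refine hmain.trans (max_le (by linarith) (hγw.trans (max_le (by linarith) (by linarith))))
    linarith
  · exact add_nonneg hβnn hγOn_nn
end

section
/- Let σ₁, σ₂ ∈ K∞ with σ₁(s) ≥ s for all s, and let λ be a class-K∞ function with σ₂(λ(s)) < (1/4)σ₁⁻¹(s) for all s > 0. Suppose a scalar continuous function v : [0,T) → [0,∞) satisfies v(0) ≤ σ₁(c) with c := v(0), and the feedback estimate v(t) ≤ max{σ₁(c), σ₂(λ(sup_{s≤t} v(s)))} holds for all t. Then σ₂(λ(v(t))) ≤ c/2 for all t ∈ [0,T). -/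
open Set Filter

/-!
Put `γ := σ₂ ∘ lam` and let `S` be the supremum of `v` on `[0, t]`. Taking the supremum of the
feedback estimate gives `S ≤ max (σ₁ c) (γ S)`. Since `σ₁⁻¹ s ≤ s`, the hypothesis on `lam`
makes `γ` a strict contraction, `γ s < s / 4`, so the second alternative is impossible unless
`S ≤ σ₁ c`. Hence, for `c > 0`, `γ (v t) ≤ γ (σ₁ c) < σ₁⁻¹ (σ₁ c) / 4 = c / 4`.
-/

namespace ClassK

variable {f g : ℝ → ℝ}

theorem monotoneOn (hf : ClassK f) : MonotoneOn f (Ici 0) :=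
  hf.2.1.monotoneOn

theorem nonneg (hf : ClassK f) {s : ℝ} (hs : 0 ≤ s) : 0 ≤ f s :=
  hf.2.2 ▸ hf.monotoneOn self_mem_Ici hs hs

theorem comp (hf : ClassK f) (hg : ClassK g) : ClassK (f ∘ g) := by
  have hmaps : MapsTo g (Ici 0) (Ici 0) := fun _ hs => hg.nonneg hs
  exact ⟨hf.1.comp hg.1 hmaps, hf.2.1.comp hg.2.1 hmaps, by simp [hg.2.2, hf.2.2]⟩

end ClassK

theorem le_of_le_max_of_lt_self {γ : ℝ → ℝ} (hγ : ∀ s, 0 < s → γ s < s) {a S : ℝ}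
    (ha : 0 ≤ a) (h : S ≤ max a (γ S)) : S ≤ a := by
  by_contra! haS
  have hγS := hγ S (ha.trans_lt haS)
  rcases le_max_iff.1 h with h | h <;> linarith

theorem lt_quarter_of_small_gain {γ σ σinv : ℝ → ℝ} (hγ : ∀ s, 0 ≤ s → 0 ≤ γ s)
    (hσge : ∀ s, 0 ≤ s → s ≤ σ s) (hinv : ∀ s, 0 ≤ s → σ (σinv s) = s)
    (hsmall : ∀ s, 0 < s → γ s < 1 / 4 * σinv s) {s : ℝ} (hs : 0 < s) : γ s < s / 4 := by
  have hγs := hsmall s hs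
  have hinv_nonneg : 0 ≤ σinv s := by linarith [hγ s hs.le]
  have hinv_le : σinv s ≤ s := (hσge _ hinv_nonneg).trans_eq (hinv s hs.le)
  linarith

theorem sSup_image_Icc_le_max {γ v : ℝ → ℝ} (hγ : MonotoneOn γ (Ici 0)) {a t : ℝ}
    (ht : 0 ≤ t) (hv : ContinuousOn v (Icc 0 t)) (hv0 : 0 ≤ v 0)
    (hfb : ∀ s ∈ Icc 0 t, v s ≤ max a (γ (sSup (v '' Icc 0 s)))) :
    sSup (v '' Icc 0 t) ≤ max a (γ (sSup (v '' Icc 0 t))) := by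
  have hbdd : BddAbove (v '' Icc 0 t) := isCompact_Icc.bddAbove_image hv
  refine csSup_le (Nonempty.image v (nonempty_Icc.2 ht)) ?_
  rintro _ ⟨s, hs, rfl⟩
  have hsub : v '' Icc 0 s ⊆ v '' Icc 0 t := image_mono (Icc_subset_Icc le_rfl hs.2)
  have hsup_nonneg : 0 ≤ sSup (v '' Icc 0 s) :=
    le_csSup_of_le (hbdd.mono hsub) (mem_image_of_mem v (left_mem_Icc.2 hs.1)) hv0
  have hsup_le : sSup (v '' Icc 0 s) ≤ sSup (v '' Icc 0 t) :=
    csSup_le_csSup hbdd (Nonempty.image v (nonempty_Icc.2 hs.1)) hsub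
  exact (hfb s hs).trans (max_le_max le_rfl (hγ hsup_nonneg (hsup_nonneg.trans hsup_le) hsup_le))

/-- Abstract small-gain argument: if `σ₁, σ₂ ∈ K∞` with `σ₁(s) ≥ s`, `lam ∈ K∞` satisfies
`σ₂(lam(s)) < (1/4)σ₁⁻¹(s)` for `s > 0`, and a continuous nonnegative `v` on `[0,T)` with
`c := v 0` satisfies `v(t) ≤ max {σ₁(c), σ₂(lam(sup_{s ≤ t} v(s)))}`, then
`σ₂(lam(v(t))) ≤ c/2` on `[0,T)`. -/
theorem stmt18 (σ₁ σ₂ lam σ₁inv : ℝ → ℝ)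
    (hσ₁ : ClassKInfty σ₁) (hσ₂ : ClassKInfty σ₂) (hlam : ClassKInfty lam)
    (hσ₁ge : ∀ s : ℝ, 0 ≤ s → s ≤ σ₁ s)
    (hinv₁ : ∀ s : ℝ, 0 ≤ s → σ₁ (σ₁inv s) = s)
    (hinv₂ : ∀ s : ℝ, 0 ≤ s → σ₁inv (σ₁ s) = s)
    (hsmall : ∀ s : ℝ, 0 < s → σ₂ (lam s) < (1 / 4) * σ₁inv s)
    (T : ℝ) (v : ℝ → ℝ) (c : ℝ) (hc : c = v 0)
    (hvcont : ContinuousOn v (Ico 0 T))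
    (hvnonneg : ∀ t ∈ Ico (0:ℝ) T, 0 ≤ v t)
    (hfb : ∀ t ∈ Ico (0:ℝ) T,
      v t ≤ max (σ₁ c) (σ₂ (lam (sSup (v '' Icc 0 t))))) :
    ∀ t ∈ Ico (0:ℝ) T, σ₂ (lam (v t)) ≤ c / 2 := by
  rintro t ⟨ht0, htT⟩
  have hγ : ClassK (σ₂ ∘ lam) := hσ₂.1.comp hlam.1
  have hIcc : Icc 0 t ⊆ Ico 0 T := Icc_subset_Ico_right htT
  have hc0 : 0 ≤ c := hc ▸ hvnonneg 0 (hIcc (left_mem_Icc.2 ht0))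
  have hγ_lt s (hs : 0 < s) : (σ₂ ∘ lam) s < s :=
    (lt_quarter_of_small_gain (fun _ => hγ.nonneg) hσ₁ge hinv₁ hsmall hs).trans (by linarith)
  have hsup : sSup (v '' Icc 0 t) ≤ σ₁ c :=
    le_of_le_max_of_lt_self hγ_lt (hc0.trans (hσ₁ge c hc0))
      (sSup_image_Icc_le_max hγ.monotoneOn ht0 (hvcont.mono hIcc) (hc ▸ hc0)
        fun s hs => hfb s (hIcc hs))
  have hvt : v t ≤ σ₁ c :=
    le_csSup_of_le (isCompact_Icc.bddAbove_image (hvcont.mono hIcc))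
      (mem_image_of_mem v (right_mem_Icc.2 ht0)) le_rfl |>.trans hsup
  have hmono : σ₂ (lam (v t)) ≤ σ₂ (lam (σ₁ c)) :=
    hγ.monotoneOn (hvnonneg t ⟨ht0, htT⟩) (hc0.trans (hσ₁ge c hc0)) hvt
  rcases hc0.eq_or_lt with rfl | hc_pos
  · simpa [hσ₁.1.2.2, hlam.1.2.2, hσ₂.1.2.2] using hmono
  · have := hsmall (σ₁ c) (hc_pos.trans_le (hσ₁ge c hc0))
    rw [hinv₂ c hc0] at this
    linarith
end
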